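/- Let H be a finite-dimensional complex Hilbert space and r > 0. Let A = {A_n} and B = {B_n} be two stable sequences of sets of quantum states on H^{⊗n}. Then the set-extended quantum Hoeffding divergence is subadditive along the sequences: for all m, n ∈ ℕ, H_{(m+n),r}(A_{m+n}‖B_{m+n}) ≤ H_{m,r}(A_m‖B_m) + H_{n,r}(A_n‖B_n), where H_{k,r}(A_k‖B_k) := inf_{ρ∈A_k, σ∈B_k} H_{k,r}(ρ‖σ). -/

import Mathlib

open Filter Set
open scoped ComplexOrder Classical

noncomputable section

/-- The index type of the `n`-fold tensor power of a `d`-dimensional Hilbert space. -/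
abbrev TIdx (d n : ℕ) := Fin n → Fin d

/-- Operators on the `n`-fold tensor power of a `d`-dimensional complex Hilbert space. -/
abbrev Mat (d n : ℕ) := Matrix (TIdx d n) (TIdx d n) ℂ

/-- A quantum state: positive semidefinite with unit trace. -/
def IsState {d n : ℕ} (ρ : Mat d n) : Prop := ρ.PosSemidef ∧ ρ.trace = 1

/-- Tensor product of an operator on `H^{⊗m}` and one on `H^{⊗n}`, as an operator on
`H^{⊗(m+n)}`. -/
def tensorProd {d m n : ℕ} (A : Mat d m) (B : Mat d n) : Mat d (m + n) :=
  Matrix.of fun f g =>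
    A (fun i => f (Fin.castAdd n i)) (fun i => g (Fin.castAdd n i)) *
      B (fun j => f (Fin.natAdd m j)) (fun j => g (Fin.natAdd m j))

/-- `suppLE ρ σ` means the support of `ρ` is contained in the support of `σ`
(equivalently, `ker σ ⊆ ker ρ` for Hermitian PSD matrices). -/
def suppLE {d n : ℕ} (ρ σ : Mat d n) : Prop :=
  ∀ v : TIdx d n → ℂ, σ.mulVec v = 0 → ρ.mulVec v = 0

/-- Real matrix power via the functional calculus (junk value `0` for non-Hermitian input);
powers are taken on the support since `(0:ℝ) ^ p = 0` for `p ≠ 0`. -/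
def mpow {d n : ℕ} (A : Mat d n) (p : ℝ) : Mat d n :=
  if h : A.IsHermitian then
    (h.eigenvectorUnitary : Mat d n) *
      Matrix.diagonal (fun i => ((h.eigenvalues i ^ p : ℝ) : ℂ)) *
      (star (h.eigenvectorUnitary : Mat d n))
  else 0

/-- Matrix base-2 logarithm via the functional calculus, taken on the support. -/
def mlog {d n : ℕ} (A : Mat d n) : Mat d n :=
  if h : A.IsHermitian then
    (h.eigenvectorUnitary : Mat d n) *
      Matrix.diagonal (fun i => ((Real.logb 2 (h.eigenvalues i) : ℝ) : ℂ)) *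
      (star (h.eigenvectorUnitary : Mat d n))
  else 0

/-- The Petz quasi-divergence quantity `tr[ρ^α σ^{1-α}]`. -/
def qPetz {d n : ℕ} (α : ℝ) (ρ σ : Mat d n) : ℝ :=
  (mpow ρ α * mpow σ (1 - α)).trace.re

/-- The Petz Rényi divergence (base-2), `+∞` unless `supp ρ ⊆ supp σ`. -/
def DPetz {d n : ℕ} (α : ℝ) (ρ σ : Mat d n) : EReal :=
  if suppLE ρ σ then (((α - 1)⁻¹ * Real.logb 2 (qPetz α ρ σ) : ℝ) : EReal) else ⊤

/-- The sandwiched quasi-divergence quantity `tr[(σ^{(1-α)/(2α)} ρ σ^{(1-α)/(2α)})^α]`. -/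
def qSand {d n : ℕ} (α : ℝ) (ρ σ : Mat d n) : ℝ :=
  (mpow (mpow σ ((1 - α) / (2 * α)) * ρ * mpow σ ((1 - α) / (2 * α))) α).trace.re

/-- The sandwiched Rényi divergence (base-2), `+∞` unless `supp ρ ⊆ supp σ`. -/
def DSand {d n : ℕ} (α : ℝ) (ρ σ : Mat d n) : EReal :=
  if suppLE ρ σ then (((α - 1)⁻¹ * Real.logb 2 (qSand α ρ σ) : ℝ) : EReal) else ⊤

/-- The quantum Hoeffding divergence `H_{n,r}(ρ‖σ)`. -/
def Hoeffding {d : ℕ} (n : ℕ) (r : ℝ) (ρ σ : Mat d n) : EReal :=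
  ⨆ α ∈ Set.Ioo (0 : ℝ) 1,
    (((α - 1) / α : ℝ) : EReal) * ((((n : ℝ) * r : ℝ) : EReal) - DPetz α ρ σ)

/-- The quantum Hoeffding anti-divergence `H*_{n,r}(ρ‖σ)`. -/
def HoeffdingA {d : ℕ} (n : ℕ) (r : ℝ) (ρ σ : Mat d n) : EReal :=
  ⨆ α ∈ Set.Ioi (1 : ℝ),
    (((α - 1) / α : ℝ) : EReal) * ((((n : ℝ) * r : ℝ) : EReal) - DSand α ρ σ)

/-- Petz Rényi divergence between two sets of states. -/
def DPetzSet {d n : ℕ} (α : ℝ) (A B : Set (Mat d n)) : EReal :=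
  ⨅ ρ ∈ A, ⨅ σ ∈ B, DPetz α ρ σ

/-- Sandwiched Rényi divergence between two sets of states. -/
def DSandSet {d n : ℕ} (α : ℝ) (A B : Set (Mat d n)) : EReal :=
  ⨅ ρ ∈ A, ⨅ σ ∈ B, DSand α ρ σ

/-- Quantum Hoeffding divergence between two sets of states. -/
def HoeffdingSet {d : ℕ} (n : ℕ) (r : ℝ) (A B : Set (Mat d n)) : EReal :=
  ⨅ ρ ∈ A, ⨅ σ ∈ B, Hoeffding n r ρ σ

/-- Quantum Hoeffding anti-divergence between two sets of states. -/
def HoeffdingASet {d : ℕ} (n : ℕ) (r : ℝ) (A B : Set (Mat d n)) : EReal :=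
  ⨆ ρ ∈ A, ⨆ σ ∈ B, HoeffdingA n r ρ σ

/-- A test (two-outcome POVM element): `0 ≤ M ≤ I`. -/
def IsTest {d n : ℕ} (M : Mat d n) : Prop := M.PosSemidef ∧ (1 - M).PosSemidef

/-- Worst-case type-I error of a test `M` for the set `A`. -/
def typeI {d n : ℕ} (A : Set (Mat d n)) (M : Mat d n) : ℝ :=
  ⨆ ρ ∈ A, (ρ * (1 - M)).trace.re

/-- Worst-case type-II error of a test `M` for the set `B`. -/
def typeII {d n : ℕ} (B : Set (Mat d n)) (M : Mat d n) : ℝ :=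
  ⨆ σ ∈ B, (σ * M).trace.re

/-- Optimal type-I error at type-II error exponent `r`:
`α_{n,r}(A‖B) = inf { α(A,M) : 0 ≤ M ≤ I, β(B,M) ≤ 2^{-nr} }`. -/
def optAlpha {d : ℕ} (n : ℕ) (r : ℝ) (A B : Set (Mat d n)) : ℝ :=
  sInf {x | ∃ M : Mat d n, IsTest M ∧ typeII B M ≤ (2 : ℝ) ^ (-((n : ℝ) * r)) ∧ x = typeI A M}

/-- Optimal type-I error for a single pair of states. -/
def optAlphaPair {d : ℕ} (n : ℕ) (r : ℝ) (ρ σ : Mat d n) : ℝ :=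
  optAlpha n r {ρ} {σ}

/-- `- log₂ x` as an extended real, with `-log₂ 0 = +∞`. -/
def negLog2 (x : ℝ) : EReal := if x = 0 then ⊤ else ((-Real.logb 2 x : ℝ) : EReal)

/-- A sequence of sets of operators is stable under tensor product. -/
def Stable {d : ℕ} (A : ∀ n : ℕ, Set (Mat d n)) : Prop :=
  ∀ m n : ℕ, ∀ X ∈ A m, ∀ Y ∈ A n, tensorProd X Y ∈ A (m + n)

/-- Invariance under conjugation by the unitaries permuting the tensor factors. -/
def PermInvariant {d n : ℕ} (C : Set (Mat d n)) : Prop :=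
  ∀ π : Equiv.Perm (Fin n), ∀ M ∈ C,
    Matrix.of (fun f g : TIdx d n => M (f ∘ π) (g ∘ π)) ∈ C

/-- The polar of a set of positive semidefinite operators. -/
def polar {d n : ℕ} (C : Set (Mat d n)) : Set (Mat d n) :=
  {X | X.PosSemidef ∧ ∀ Y ∈ C, (X * Y).trace.re ≤ 1}

/-- Max-relative entropy between two sets (base-2):
`inf_{ρ∈A,σ∈B} log inf {λ ≥ 0 : ρ ≤ λσ}`. -/
def DmaxSet {d n : ℕ} (A B : Set (Mat d n)) : EReal :=
  ⨅ ρ ∈ A, ⨅ σ ∈ B, ⨅ lam ∈ {l : ℝ | 0 ≤ l ∧ (l • σ - ρ).PosSemidef},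
    ((Real.logb 2 lam : ℝ) : EReal)

/-- Umegaki relative entropy (base-2), `+∞` unless `supp ρ ⊆ supp σ`. -/
def DUm {d n : ℕ} (ρ σ : Mat d n) : EReal :=
  if suppLE ρ σ then (((ρ * (mlog ρ - mlog σ)).trace.re : ℝ) : EReal) else ⊤

/-- Umegaki relative entropy between two sets. -/
def DUmSet {d n : ℕ} (A B : Set (Mat d n)) : EReal :=
  ⨅ ρ ∈ A, ⨅ σ ∈ B, DUm ρ σ

/-- Spectral projection onto the nonnegative eigenspace of a matrix
(junk value `0` for non-Hermitian input). -/
def posProj {d n : ℕ} (X : Mat d n) : Mat d n :=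
  if h : X.IsHermitian then
    (h.eigenvectorUnitary : Mat d n) *
      Matrix.diagonal (fun i => if 0 ≤ h.eigenvalues i then (1 : ℂ) else 0) *
      (star (h.eigenvectorUnitary : Mat d n))
  else 0

/-! For every `α ∈ (0,1)` the Petz quasi-entropy `tr[ρ^α σ^{1-α}]` is multiplicative under tensor
products (the matrix power of `ρ₁ ⊗ ρ₂` is `ρ₁^α ⊗ ρ₂^α`, by uniqueness of the spectral
functional calculus), and supports of tensor products multiply. Hence every term of the supremum
defining `H` is additive on product pairs, and
`H_{m+n,r}(ρ₁ ⊗ ρ₂ ‖ σ₁ ⊗ σ₂) ≤ H_{m,r}(ρ₁ ‖ σ₁) + H_{n,r}(ρ₂ ‖ σ₂)`.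
Stability puts the product pairs into `A_{m+n} × B_{m+n}`, and passing to infima gives the claim.
In `EReal` this last step needs the set divergences to be `> ⊥`: evaluating at `α = 1/2` gives
the uniform bound `H_{n,r} ≥ -n r`. -/

open Matrix Unitary
open scoped Kronecker

section Tensor

variable {d m n : ℕ}

def splitIdx (d m n : ℕ) : TIdx d (m + n) ≃ TIdx d m × TIdx d n := (Fin.appendEquiv m n).symm

theorem tensorProd_eq_submatrix_kronecker (A : Mat d m) (B : Mat d n) :
    tensorProd A B = (A ⊗ₖ B).submatrix (splitIdx d m n) (splitIdx d m n) := rfl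

theorem tensorProd_mul (A A' : Mat d m) (B B' : Mat d n) :
    tensorProd (A * A') (B * B') = tensorProd A B * tensorProd A' B' := by
  simp only [tensorProd_eq_submatrix_kronecker, submatrix_mul_equiv, mul_kronecker_mul]

theorem trace_tensorProd (A : Mat d m) (B : Mat d n) :
    (tensorProd A B).trace = A.trace * B.trace := by
  rw [← trace_kronecker]
  exact (splitIdx d m n).sum_comp fun i => (A ⊗ₖ B) i i

theorem conjTranspose_tensorProd (A : Mat d m) (B : Mat d n) :
    (tensorProd A B)ᴴ = tensorProd Aᴴ Bᴴ := by
  simp only [tensorProd_eq_submatrix_kronecker, conjTranspose_submatrix, conjTranspose_kronecker]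

theorem tensorProd_one : tensorProd (1 : Mat d m) (1 : Mat d n) = 1 := by
  rw [tensorProd_eq_submatrix_kronecker, one_kronecker_one, submatrix_one_equiv]

theorem tensorProd_diagonal (a : TIdx d m → ℂ) (b : TIdx d n → ℂ) :
    tensorProd (diagonal a) (diagonal b) =
      diagonal fun f => a (splitIdx d m n f).1 * b (splitIdx d m n f).2 := by
  rw [tensorProd_eq_submatrix_kronecker, diagonal_kronecker_diagonal, submatrix_diagonal_equiv]
  rfl

theorem tensorProd_mem_unitary {U : Mat d m} {V : Mat d n} (hU : U ∈ unitary (Mat d m))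
    (hV : V ∈ unitary (Mat d n)) : tensorProd U V ∈ unitary (Mat d (m + n)) := by
  have hstar : star (tensorProd U V) = tensorProd (star U) (star V) := conjTranspose_tensorProd U V
  rw [Unitary.mem_iff, hstar, ← tensorProd_mul, ← tensorProd_mul, Unitary.star_mul_self_of_mem hU,
    Unitary.mul_star_self_of_mem hU, Unitary.star_mul_self_of_mem hV,
    Unitary.mul_star_self_of_mem hV, tensorProd_one]
  exact ⟨rfl, rfl⟩

def tensorProdUnitary (u : unitary (Mat d m)) (v : unitary (Mat d n)) : unitary (Mat d (m + n)) :=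
  ⟨tensorProd (u : Mat d m) (v : Mat d n), tensorProd_mem_unitary u.2 v.2⟩

theorem tensorProd_conjStarAlgAut (u : unitary (Mat d m)) (v : unitary (Mat d n))
    (X : Mat d m) (Y : Mat d n) :
    tensorProd (conjStarAlgAut ℂ (Mat d m) u X) (conjStarAlgAut ℂ (Mat d n) v Y) =
      conjStarAlgAut ℂ (Mat d (m + n)) (tensorProdUnitary u v) (tensorProd X Y) := by
  simp only [conjStarAlgAut_apply, tensorProdUnitary, star_eq_conjTranspose,
    conjTranspose_tensorProd, tensorProd_mul]

end Tensor

namespace Matrix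

variable {ι 𝕜 : Type*} [RCLike 𝕜] [Fintype ι] [DecidableEq ι]

theorem conjStarAlgAut_diagonal_comp {u : unitary (Matrix ι ι 𝕜)} {a b : ι → ℝ}
    (h : conjStarAlgAut 𝕜 _ u (diagonal (RCLike.ofReal ∘ a)) = diagonal (RCLike.ofReal ∘ b))
    (f : ℝ → ℝ) :
    conjStarAlgAut 𝕜 _ u (diagonal (RCLike.ofReal ∘ f ∘ a)) =
      diagonal (RCLike.ofReal ∘ f ∘ b) := by
  have hu : (u : Matrix ι ι 𝕜) * diagonal (RCLike.ofReal ∘ a) =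
      diagonal (RCLike.ofReal ∘ b) * (u : Matrix ι ι 𝕜) := by
    rw [← h, conjStarAlgAut_apply, mul_assoc, coe_star_mul_self, mul_one]
  have hfu : (u : Matrix ι ι 𝕜) * diagonal (RCLike.ofReal ∘ f ∘ a) =
      diagonal (RCLike.ofReal ∘ f ∘ b) * (u : Matrix ι ι 𝕜) := by
    ext i j
    have hij := congr_fun₂ hu i j
    simp only [mul_diagonal, diagonal_mul, Function.comp_apply] at hij ⊢
    by_cases hzero : (u : Matrix ι ι 𝕜) i j = 0
    · simp [hzero]
    · have hab : a j = b i := by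
        exact_mod_cast mul_left_cancel₀ hzero (hij.trans (mul_comm _ _))
      rw [hab, mul_comm]
  rw [conjStarAlgAut_apply, hfu, mul_assoc, mul_star_self_of_mem u.2, mul_one]

namespace IsHermitian

variable {A : Matrix ι ι 𝕜} (hA : A.IsHermitian)

theorem cfc_eq_conjStarAlgAut {u : unitary (Matrix ι ι 𝕜)} {e : ι → ℝ}
    (hAu : A = conjStarAlgAut 𝕜 _ u (diagonal (RCLike.ofReal ∘ e))) (f : ℝ → ℝ) :
    hA.cfc f = conjStarAlgAut 𝕜 _ u (diagonal (RCLike.ofReal ∘ f ∘ e)) := by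
  set w := star u * hA.eigenvectorUnitary
  have hw : conjStarAlgAut 𝕜 _ w (diagonal (RCLike.ofReal ∘ hA.eigenvalues)) =
      diagonal (RCLike.ofReal ∘ e) := by
    rw [conjStarAlgAut_mul_apply, ← hA.spectral_theorem, hAu, ← conjStarAlgAut_symm,
      StarAlgEquiv.symm_apply_apply]
  have huw : hA.eigenvectorUnitary = u * w := by rw [← mul_assoc, mul_star_self, one_mul]
  rw [IsHermitian.cfc, huw, conjStarAlgAut_mul_apply, conjStarAlgAut_diagonal_comp hw]

theorem cfc_mul_cfc (f g : ℝ → ℝ) : hA.cfc f * hA.cfc g = hA.cfc fun x => f x * g x := by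
  simp only [IsHermitian.cfc, ← map_mul, diagonal_mul_diagonal]
  congr 2
  ext i
  simp

theorem cfc_congr {f g : ℝ → ℝ} (hfg : ∀ i, f (hA.eigenvalues i) = g (hA.eigenvalues i)) :
    hA.cfc f = hA.cfc g := by
  simp only [IsHermitian.cfc, Function.comp_def, hfg]

theorem cfc_id : hA.cfc (fun x => x) = A :=
  hA.spectral_theorem.symm

theorem isHermitian_cfc (f : ℝ → ℝ) : (hA.cfc f).IsHermitian :=
  hA.cfc_eq f ▸ cfc_predicate f A

end IsHermitian

end Matrix

section MatrixPower

variable {d m n : ℕ}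

theorem isHermitian_tensorProd {A : Mat d m} {B : Mat d n} (hA : A.IsHermitian)
    (hB : B.IsHermitian) : (tensorProd A B).IsHermitian := by
  rw [IsHermitian, conjTranspose_tensorProd, hA.eq, hB.eq]

theorem mpow_eq_cfc {A : Mat d n} (hA : A.IsHermitian) (p : ℝ) :
    mpow A p = hA.cfc (· ^ p) := by
  rw [mpow, dif_pos hA]
  rfl

theorem isHermitian_mpow {A : Mat d n} (hA : A.IsHermitian) (p : ℝ) :
    (mpow A p).IsHermitian := by
  rw [mpow_eq_cfc hA]
  exact hA.isHermitian_cfc _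

theorem mpow_one {A : Mat d n} (hA : A.IsHermitian) : mpow A 1 = A := by
  rw [mpow_eq_cfc hA]
  exact (hA.cfc_congr fun i => Real.rpow_one _).trans hA.cfc_id

theorem mpow_mul_mpow {A : Mat d n} (hA : A.PosSemidef) {p q : ℝ} (hpq : p + q ≠ 0) :
    mpow A p * mpow A q = mpow A (p + q) := by
  simp only [mpow_eq_cfc hA.isHermitian, hA.isHermitian.cfc_mul_cfc]
  exact hA.isHermitian.cfc_congr fun i => (Real.rpow_add' (hA.eigenvalues_nonneg i) hpq).symm

-- `mpow A (-1)` is the Moore–Penrose pseudo-inverse of `A`, since `(0 : ℝ) ^ (-1 : ℝ) = 0`.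
theorem mul_mpow_neg_one_mul {A : Mat d n} (hA : A.IsHermitian) : A * mpow A (-1) * A = A :=
  calc A * mpow A (-1) * A = hA.cfc (fun x => x) * hA.cfc (· ^ (-1 : ℝ)) * hA.cfc (fun x => x) := by
        rw [hA.cfc_id, mpow_eq_cfc hA]
    _ = hA.cfc (fun x => x) := by
        rw [hA.cfc_mul_cfc, hA.cfc_mul_cfc]
        exact hA.cfc_congr fun i => by simp only [Real.rpow_neg_one, mul_inv_mul_cancel]
    _ = A := hA.cfc_id

theorem mpow_tensorProd {A : Mat d m} {B : Mat d n} (hA : A.PosSemidef) (hB : B.PosSemidef)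
    (p : ℝ) : mpow (tensorProd A B) p = tensorProd (mpow A p) (mpow B p) := by
  set eA := hA.isHermitian.eigenvalues
  set eB := hB.isHermitian.eigenvalues
  have hAB : tensorProd A B = conjStarAlgAut ℂ _
      (tensorProdUnitary hA.isHermitian.eigenvectorUnitary hB.isHermitian.eigenvectorUnitary)
      (diagonal (RCLike.ofReal ∘ fun f => eA (splitIdx d m n f).1 * eB (splitIdx d m n f).2)) := by
    conv_lhs => rw [hA.isHermitian.spectral_theorem, hB.isHermitian.spectral_theorem]
    rw [tensorProd_conjStarAlgAut, tensorProd_diagonal]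
    simp [Function.comp_def, eA, eB]
  have hABh := isHermitian_tensorProd hA.isHermitian hB.isHermitian
  rw [mpow_eq_cfc hABh, hABh.cfc_eq_conjStarAlgAut hAB, mpow_eq_cfc hA.isHermitian,
    mpow_eq_cfc hB.isHermitian, IsHermitian.cfc, IsHermitian.cfc, tensorProd_conjStarAlgAut,
    tensorProd_diagonal]
  congr 2
  ext f
  simp [Real.mul_rpow (hA.eigenvalues_nonneg _) (hB.eigenvalues_nonneg _), eA, eB]

end MatrixPower

section Support

variable {d m n : ℕ}

theorem suppLE.mul_eq_zero {ρ σ : Mat d n} (hs : suppLE ρ σ) {J : Type*} [Fintype J]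
    {K : Matrix (TIdx d n) J ℂ} (hK : σ * K = 0) : ρ * K = 0 := by
  ext i j
  have hcol : σ *ᵥ (fun a => K a j) = 0 := by
    funext i'
    simpa [mulVec, dotProduct, mul_apply] using congr_fun₂ hK i' j
  simpa [mulVec, dotProduct, mul_apply] using congr_fun (hs _ hcol) i

theorem suppLE_iff_exists_eq_mul {ρ σ : Mat d n} (hσ : σ.IsHermitian) :
    suppLE ρ σ ↔ ∃ X, ρ = X * σ := by
  refine ⟨fun hs => ⟨ρ * mpow σ (-1), ?_⟩, ?_⟩
  · have hker : ρ * (1 - mpow σ (-1) * σ) = 0 :=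
      hs.mul_eq_zero (by rw [mul_sub, mul_one, ← mul_assoc, mul_mpow_neg_one_mul hσ, sub_self])
    rw [mul_sub, mul_one, sub_eq_zero] at hker
    rw [mul_assoc]
    exact hker
  · rintro ⟨X, rfl⟩ v hv
    rw [← mulVec_mulVec, hv, mulVec_zero]

theorem suppLE.tensorProd {ρ₁ σ₁ : Mat d m} {ρ₂ σ₂ : Mat d n} (hσ₁ : σ₁.IsHermitian)
    (hσ₂ : σ₂.IsHermitian) (h₁ : suppLE ρ₁ σ₁) (h₂ : suppLE ρ₂ σ₂) :
    suppLE (tensorProd ρ₁ ρ₂) (tensorProd σ₁ σ₂) := by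
  obtain ⟨X₁, rfl⟩ := (suppLE_iff_exists_eq_mul hσ₁).1 h₁
  obtain ⟨X₂, rfl⟩ := (suppLE_iff_exists_eq_mul hσ₂).1 h₂
  exact (suppLE_iff_exists_eq_mul (isHermitian_tensorProd hσ₁ hσ₂)).2
    ⟨_, tensorProd_mul X₁ σ₁ X₂ σ₂⟩

end Support

section PetzQuasiEntropy

variable {d m n : ℕ}

theorem trace_mpow_mul_mpow_eq {ρ σ : Mat d n} (hρ : ρ.PosSemidef) (hσ : σ.PosSemidef) {p q : ℝ}
    (hp : p ≠ 0) (hq : q ≠ 0) :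
    (mpow ρ p * mpow σ q).trace =
      ((mpow σ (q / 2) * mpow ρ (p / 2))ᴴ * (mpow σ (q / 2) * mpow ρ (p / 2))).trace := by
  have hR : mpow ρ (p / 2) * mpow ρ (p / 2) = mpow ρ p := by
    rw [mpow_mul_mpow hρ (by rwa [add_halves]), add_halves]
  have hS : mpow σ (q / 2) * mpow σ (q / 2) = mpow σ q := by
    rw [mpow_mul_mpow hσ (by rwa [add_halves]), add_halves]
  rw [conjTranspose_mul, (isHermitian_mpow hρ.isHermitian _).eq,
    (isHermitian_mpow hσ.isHermitian _).eq, ← hR, ← hS, mul_assoc, trace_mul_comm (mpow ρ (p / 2))]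
  simp only [mul_assoc]

theorem trace_mpow_mul_mpow_nonneg {ρ σ : Mat d n} (hρ : ρ.PosSemidef) (hσ : σ.PosSemidef)
    {p q : ℝ} (hp : p ≠ 0) (hq : q ≠ 0) : 0 ≤ (mpow ρ p * mpow σ q).trace := by
  rw [trace_mpow_mul_mpow_eq hρ hσ hp hq]
  exact (posSemidef_conjTranspose_mul_self _).trace_nonneg

theorem ofReal_qPetz {ρ σ : Mat d n} (hρ : ρ.PosSemidef) (hσ : σ.PosSemidef) {α : ℝ}
    (hα₀ : α ≠ 0) (hα₁ : α ≠ 1) : (qPetz α ρ σ : ℂ) = (mpow ρ α * mpow σ (1 - α)).trace := by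
  have hnonneg := trace_mpow_mul_mpow_nonneg hρ hσ hα₀ (sub_ne_zero.2 hα₁.symm)
  exact Complex.ext rfl (by simp [(Complex.nonneg_iff.mp hnonneg).2])

theorem qPetz_tensorProd {ρ₁ σ₁ : Mat d m} {ρ₂ σ₂ : Mat d n} (hρ₁ : ρ₁.PosSemidef)
    (hσ₁ : σ₁.PosSemidef) (hρ₂ : ρ₂.PosSemidef) (hσ₂ : σ₂.PosSemidef) {α : ℝ} (hα₀ : α ≠ 0)
    (hα₁ : α ≠ 1) :
    qPetz α (tensorProd ρ₁ ρ₂) (tensorProd σ₁ σ₂) = qPetz α ρ₁ σ₁ * qPetz α ρ₂ σ₂ := by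
  rw [qPetz, mpow_tensorProd hρ₁ hρ₂, mpow_tensorProd hσ₁ hσ₂, ← tensorProd_mul,
    trace_tensorProd, ← ofReal_qPetz hρ₁ hσ₁ hα₀ hα₁, ← ofReal_qPetz hρ₂ hσ₂ hα₀ hα₁,
    ← Complex.ofReal_mul, Complex.ofReal_re]

theorem qPetz_pos {ρ σ : Mat d n} (hρ : IsState ρ) (hσ : σ.PosSemidef) (hs : suppLE ρ σ) {α : ℝ}
    (hα : α ∈ Ioo 0 1) : 0 < qPetz α ρ σ := by
  obtain ⟨hα₀, hα₁⟩ := hα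
  have hq : (qPetz α ρ σ : ℂ) = _ := ofReal_qPetz hρ.1 hσ hα₀.ne' hα₁.ne
  have hnonneg := trace_mpow_mul_mpow_nonneg hρ.1 hσ hα₀.ne' (q := 1 - α) (by linarith)
  rw [← hq] at hnonneg
  refine lt_of_le_of_ne (by exact_mod_cast hnonneg) fun h0 => ?_
  set R := mpow ρ (α / 2)
  have hSR : mpow σ ((1 - α) / 2) * R = 0 := by
    rw [← trace_conjTranspose_mul_self_eq_zero_iff, ← trace_mpow_mul_mpow_eq hρ.1 hσ hα₀.ne'
      (by linarith), ← hq, ← h0, Complex.ofReal_zero]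
  have hσR : σ * R = 0 :=
    calc σ * R = mpow σ ((1 + α) / 2) * (mpow σ ((1 - α) / 2) * R) := by
          rw [← mul_assoc, mpow_mul_mpow hσ (by linarith),
            show (1 + α) / 2 + (1 - α) / 2 = 1 by ring, mpow_one hσ.isHermitian]
      _ = 0 := by rw [hSR, mul_zero]
  have hρ0 : ρ = 0 :=
    calc ρ = mpow ρ 1 * R * mpow ρ (-(α / 2)) := by
          rw [mpow_mul_mpow hρ.1 (by linarith), mpow_mul_mpow hρ.1 (by linarith),
            show 1 + α / 2 + -(α / 2) = 1 by ring, mpow_one hρ.1.isHermitian]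
      _ = 0 := by rw [mpow_one hρ.1.isHermitian, hs.mul_eq_zero hσR, zero_mul]
  simpa [hρ0] using hρ.2

theorem qPetz_half_le_one {ρ σ : Mat d n} (hρ : IsState ρ) (hσ : IsState σ) :
    qPetz (1 / 2) ρ σ ≤ 1 := by
  set P := mpow ρ (1 / 2)
  set S := mpow σ (1 - 1 / 2)
  have hP : P * P = ρ := by
    rw [mpow_mul_mpow hρ.1 (by norm_num), show (1 / 2 : ℝ) + 1 / 2 = 1 by norm_num,
      mpow_one hρ.1.isHermitian]
  have hS : S * S = σ := by
    rw [mpow_mul_mpow hσ.1 (by norm_num), show (1 - 1 / 2 : ℝ) + (1 - 1 / 2) = 1 by norm_num,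
      mpow_one hσ.1.isHermitian]
  have hPS : (P - S)ᴴ = P - S :=
    ((isHermitian_mpow hρ.1.isHermitian _).sub (isHermitian_mpow hσ.1.isHermitian _)).eq
  -- `2 tr(√ρ √σ) ≤ tr ρ + tr σ`, as `tr (√ρ - √σ)² ≥ 0`
  have hsq := (Complex.nonneg_iff.mp (posSemidef_conjTranspose_mul_self (P - S)).trace_nonneg).1
  rw [hPS, sub_mul, mul_sub, mul_sub, hP, hS, trace_sub, trace_sub, trace_sub, trace_mul_comm S P,
    hρ.2, hσ.2] at hsq
  simp only [Complex.sub_re, Complex.one_re] at hsq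
  change (P * S).trace.re ≤ 1
  linarith

end PetzQuasiEntropy

section HoeffdingDivergence

variable {d m n : ℕ}

def hoeffdingIntegrand (n : ℕ) (r α : ℝ) (ρ σ : Mat d n) : EReal :=
  (((α - 1) / α : ℝ) : EReal) * ((((n : ℝ) * r : ℝ) : EReal) - DPetz α ρ σ)

theorem hoeffding_eq_iSup (r : ℝ) (ρ σ : Mat d n) :
    Hoeffding n r ρ σ = ⨆ α ∈ Ioo (0 : ℝ) 1, hoeffdingIntegrand n r α ρ σ := rfl

theorem hoeffdingIntegrand_of_suppLE (r : ℝ) {ρ σ : Mat d n} (hs : suppLE ρ σ) {α : ℝ}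
    (hα : α ≠ 1) : hoeffdingIntegrand n r α ρ σ =
      (((α - 1) / α * (n * r) - Real.logb 2 (qPetz α ρ σ) / α : ℝ) : EReal) := by
  rw [hoeffdingIntegrand, DPetz, if_pos hs, ← EReal.coe_sub, ← EReal.coe_mul, EReal.coe_eq_coe_iff]
  field_simp [sub_ne_zero.2 hα]

theorem hoeffdingIntegrand_of_not_suppLE (r : ℝ) {ρ σ : Mat d n} (hs : ¬suppLE ρ σ) {α : ℝ}
    (hα : α ∈ Ioo 0 1) : hoeffdingIntegrand n r α ρ σ = ⊤ := by
  rw [hoeffdingIntegrand, DPetz, if_neg hs, EReal.sub_top,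
    EReal.coe_mul_bot_of_neg (div_neg_of_neg_of_pos (by linarith [hα.2]) hα.1)]

theorem hoeffdingIntegrand_ne_bot (r : ℝ) (ρ σ : Mat d n) {α : ℝ} (hα : α ∈ Ioo 0 1) :
    hoeffdingIntegrand n r α ρ σ ≠ ⊥ := by
  by_cases hs : suppLE ρ σ
  · rw [hoeffdingIntegrand_of_suppLE r hs hα.2.ne]
    exact EReal.coe_ne_bot _
  · rw [hoeffdingIntegrand_of_not_suppLE r hs hα]
    exact top_ne_bot

theorem hoeffdingIntegrand_tensorProd_le (r : ℝ) {ρ₁ σ₁ : Mat d m} {ρ₂ σ₂ : Mat d n}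
    (hρ₁ : IsState ρ₁) (hσ₁ : σ₁.PosSemidef) (hρ₂ : IsState ρ₂) (hσ₂ : σ₂.PosSemidef) {α : ℝ}
    (hα : α ∈ Ioo 0 1) :
    hoeffdingIntegrand (m + n) r α (tensorProd ρ₁ ρ₂) (tensorProd σ₁ σ₂) ≤
      hoeffdingIntegrand m r α ρ₁ σ₁ + hoeffdingIntegrand n r α ρ₂ σ₂ := by
  by_cases h₁ : suppLE ρ₁ σ₁
  swap
  · rw [hoeffdingIntegrand_of_not_suppLE r h₁ hα,
      EReal.top_add_of_ne_bot (hoeffdingIntegrand_ne_bot r ρ₂ σ₂ hα)]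
    exact le_top
  by_cases h₂ : suppLE ρ₂ σ₂
  swap
  · rw [hoeffdingIntegrand_of_not_suppLE r h₂ hα,
      EReal.add_top_of_ne_bot (hoeffdingIntegrand_ne_bot r ρ₁ σ₁ hα)]
    exact le_top
  rw [hoeffdingIntegrand_of_suppLE r (h₁.tensorProd hσ₁.isHermitian hσ₂.isHermitian h₂) hα.2.ne,
    hoeffdingIntegrand_of_suppLE r h₁ hα.2.ne, hoeffdingIntegrand_of_suppLE r h₂ hα.2.ne,
    ← EReal.coe_add, EReal.coe_le_coe_iff,
    qPetz_tensorProd hρ₁.1 hσ₁ hρ₂.1 hσ₂ hα.1.ne' hα.2.ne,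
    Real.logb_mul (qPetz_pos hρ₁ hσ₁ h₁ hα).ne' (qPetz_pos hρ₂ hσ₂ h₂ hα).ne']
  push_cast
  exact le_of_eq (by ring)

theorem hoeffding_tensorProd_le (r : ℝ) {ρ₁ σ₁ : Mat d m} {ρ₂ σ₂ : Mat d n}
    (hρ₁ : IsState ρ₁) (hσ₁ : σ₁.PosSemidef) (hρ₂ : IsState ρ₂) (hσ₂ : σ₂.PosSemidef) :
    Hoeffding (m + n) r (tensorProd ρ₁ ρ₂) (tensorProd σ₁ σ₂) ≤
      Hoeffding m r ρ₁ σ₁ + Hoeffding n r ρ₂ σ₂ := by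
  simp only [hoeffding_eq_iSup]
  exact iSup₂_le fun α hα => (hoeffdingIntegrand_tensorProd_le r hρ₁ hσ₁ hρ₂ hσ₂ hα).trans
    (add_le_add (le_iSup₂ (f := fun α _ => hoeffdingIntegrand m r α ρ₁ σ₁) α hα)
      (le_iSup₂ (f := fun α _ => hoeffdingIntegrand n r α ρ₂ σ₂) α hα))

theorem neg_mul_le_hoeffding (r : ℝ) {ρ σ : Mat d n} (hρ : IsState ρ) (hσ : IsState σ) :
    ((-(n * r) : ℝ) : EReal) ≤ Hoeffding n r ρ σ := by
  have hhalf : (1 / 2 : ℝ) ∈ Ioo 0 1 := by norm_num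
  refine le_iSup₂_of_le (f := fun α _ => hoeffdingIntegrand n r α ρ σ) _ hhalf ?_
  by_cases hs : suppLE ρ σ
  · have hlog := Real.logb_nonpos one_lt_two (qPetz_pos hρ hσ.1 hs hhalf).le
      (qPetz_half_le_one hρ hσ)
    rw [hoeffdingIntegrand_of_suppLE r hs hhalf.2.ne, EReal.coe_le_coe_iff]
    linarith
  · rw [hoeffdingIntegrand_of_not_suppLE r hs hhalf]
    exact le_top

theorem hoeffdingSet_ne_bot (r : ℝ) {A B : Set (Mat d n)} (hA : ∀ ρ ∈ A, IsState ρ)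
    (hB : ∀ σ ∈ B, IsState σ) : HoeffdingSet n r A B ≠ ⊥ :=
  ne_bot_of_le_ne_bot (EReal.coe_ne_bot _) <|
    le_iInf₂ fun ρ hρ => le_iInf₂ fun σ hσ => neg_mul_le_hoeffding r (hA ρ hρ) (hB σ hσ)

theorem exists_hoeffding_lt_of_hoeffdingSet_lt {r : ℝ} {A B : Set (Mat d n)} {a : EReal}
    (h : HoeffdingSet n r A B < a) : ∃ ρ ∈ A, ∃ σ ∈ B, Hoeffding n r ρ σ < a := by
  simpa only [HoeffdingSet, iInf_lt_iff, exists_prop] using h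

end HoeffdingDivergence

theorem hoeffdingSet_subadditive_general {d : ℕ} {r : ℝ}
    (A B : ∀ n : ℕ, Set (Mat d n))
    (hAstate : ∀ n, ∀ ρ ∈ A n, IsState ρ) (hBstate : ∀ n, ∀ σ ∈ B n, IsState σ)
    (hAstable : Stable A) (hBstable : Stable B) (m n : ℕ) :
    HoeffdingSet (m + n) r (A (m + n)) (B (m + n)) ≤
      HoeffdingSet m r (A m) (B m) + HoeffdingSet n r (A n) (B n) := by
  refine EReal.le_add_of_forall_gt (.inl (hoeffdingSet_ne_bot r (hAstate m) (hBstate m)))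
    (.inr (hoeffdingSet_ne_bot r (hAstate n) (hBstate n))) fun a ha b hb => ?_
  obtain ⟨ρ₁, hρ₁, σ₁, hσ₁, h₁⟩ := exists_hoeffding_lt_of_hoeffdingSet_lt ha
  obtain ⟨ρ₂, hρ₂, σ₂, hσ₂, h₂⟩ := exists_hoeffding_lt_of_hoeffdingSet_lt hb
  calc HoeffdingSet (m + n) r (A (m + n)) (B (m + n))
      ≤ Hoeffding (m + n) r (tensorProd ρ₁ ρ₂) (tensorProd σ₁ σ₂) :=
        iInf₂_le_of_le _ (hAstable m n ρ₁ hρ₁ ρ₂ hρ₂) (iInf₂_le _ (hBstable m n σ₁ hσ₁ σ₂ hσ₂))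
    _ ≤ Hoeffding m r ρ₁ σ₁ + Hoeffding n r ρ₂ σ₂ :=
        hoeffding_tensorProd_le r (hAstate m ρ₁ hρ₁) (hBstate m σ₁ hσ₁).1 (hAstate n ρ₂ hρ₂)
          (hBstate n σ₂ hσ₂).1
    _ ≤ a + b := add_le_add h₁.le h₂.le

/-- The set-extended quantum Hoeffding divergence is subadditive along
stable sequences of sets of quantum states. -/
theorem hoeffdingSet_subadditive {d : ℕ} {r : ℝ} (hr : 0 < r)
    (A B : ∀ n : ℕ, Set (Mat d n))
    (hAstate : ∀ n, ∀ ρ ∈ A n, IsState ρ) (hBstate : ∀ n, ∀ σ ∈ B n, IsState σ)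
    (hAstable : Stable A) (hBstable : Stable B) (m n : ℕ) :
    HoeffdingSet (m + n) r (A (m + n)) (B (m + n)) ≤
      HoeffdingSet m r (A m) (B m) + HoeffdingSet n r (A n) (B n) :=
  hoeffdingSet_subadditive_general A B hAstate hBstate hAstable hBstable m n
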